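/- Let p ≥ 2 be an integer and A₀, A₄ ∈ ℝ. Define on (−1,1): a₀(τ) = (1−τ)^{p+2}(1+τ)^{p−2}·(A₀ + ((p+1)(p+2)/(4p))·(A₀ − A₄)·I₊(τ)) and a₄(τ) = (1+τ)^{p+2}(1−τ)^{p−2}·(A₄ + ((p+1)(p+2)/(4p))·(A₄ − A₀)·I₋(τ)). Then a₀ and a₄ both extend to C^∞ functions on an open interval containing [−1,1] if and only if A₀ = A₄ (the regularity condition a_{0,p;2p,k}(0) = a_{4,p;2p,k}(0)). -/

import Mathlib

open MeasureTheory intervalIntegral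

/-- The integral `I₊(τ) = ∫₀^τ (1+s)^{−(p−1)} (1−s)^{−(p+3)} ds`. -/
noncomputable def Iplus (p : ℕ) (τ : ℝ) : ℝ :=
  ∫ s in (0 : ℝ)..τ, 1 / ((1 + s) ^ (p - 1) * (1 - s) ^ (p + 3))

/-- The integral `I₋(τ) = ∫₀^τ (1−s)^{−(p−1)} (1+s)^{−(p+3)} ds`. -/
noncomputable def Iminus (p : ℕ) (τ : ℝ) : ℝ :=
  ∫ s in (0 : ℝ)..τ, 1 / ((1 - s) ^ (p - 1) * (1 + s) ^ (p + 3))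

lemma contOnAux (p : ℕ) : ContinuousOn (fun s : ℝ => 1 / ((1 + s) ^ (p - 1) * (1 - s) ^ (p + 3)))
    (Set.Ioo (-1 : ℝ) 1) := by
  apply ContinuousOn.div continuousOn_const
  · fun_prop
  · rintro s ⟨h1, h2⟩
    have : (0:ℝ) < 1 + s := by linarith
    have : (0:ℝ) < 1 - s := by linarith
    positivity

lemma hasDerivAt_Iplus (p : ℕ) {τ : ℝ} (hτ : τ ∈ Set.Ioo (-1:ℝ) 1) :
    HasDerivAt (Iplus p) (1 / ((1 + τ) ^ (p - 1) * (1 - τ) ^ (p + 3))) τ := by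
  have h0 : (0:ℝ) ∈ Set.Ioo (-1:ℝ) 1 := by norm_num
  have hsub : Set.uIcc (0:ℝ) τ ⊆ Set.Ioo (-1:ℝ) 1 :=
    Set.OrdConnected.uIcc_subset Set.ordConnected_Ioo h0 hτ
  exact integral_hasDerivAt_right ((contOnAux p).mono hsub |>.intervalIntegrable)
    ((contOnAux p).stronglyMeasurableAtFilter isOpen_Ioo τ hτ)
    ((contOnAux p).continuousAt (isOpen_Ioo.mem_nhds hτ))

lemma key_identity (n : ℕ) (A C : ℝ) {τ : ℝ} (hτ : τ ∈ Set.Ioo (-1:ℝ) 1) :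
    ∃ D : ℝ, HasDerivAt (fun t => (1 - t) ^ (n + 4) * (1 + t) ^ n * (A + C * Iplus (n + 2) t)) D τ ∧
      (1 - τ ^ 2) * D + (4 + 2 * ((n : ℝ) + 2) * τ) *
        ((1 - τ) ^ (n + 4) * (1 + τ) ^ n * (A + C * Iplus (n + 2) τ)) = C := by
  obtain ⟨hτ1, hτ2⟩ := hτ
  have hx : (1 - τ) ≠ 0 := by linarith
  have hy : (1 + τ) ≠ 0 := by linarith
  have hA : HasDerivAt (fun t : ℝ => (1 - t) ^ (n + 4))
      ((↑(n + 4) * (1 - τ) ^ (n + 3)) * (-1)) τ := by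
    simpa using ((hasDerivAt_id τ).const_sub 1).fun_pow (n + 4)
  have hB : HasDerivAt (fun t : ℝ => (1 + t) ^ n) ((↑n * (1 + τ) ^ (n - 1)) * 1) τ := by
    simpa using ((hasDerivAt_id τ).const_add 1).fun_pow n
  have hI := hasDerivAt_Iplus (n + 2) ⟨hτ1, hτ2⟩
  have hG : HasDerivAt (fun t : ℝ => A + C * Iplus (n + 2) t)
      (C * (1 / ((1 + τ) ^ (n + 2 - 1) * (1 - τ) ^ (n + 2 + 3)))) τ := (hI.const_mul C).const_add A
  refine ⟨_, (hA.mul hB).mul hG, ?_⟩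
  show (1 - τ ^ 2) * ((↑(n + 4) * (1 - τ) ^ (n + 3) * (-1) * (1 + τ) ^ n +
      (1 - τ) ^ (n + 4) * ((↑n * (1 + τ) ^ (n - 1)) * 1)) * (A + C * Iplus (n + 2) τ) +
      (1 - τ) ^ (n + 4) * (1 + τ) ^ n *
        (C * (1 / ((1 + τ) ^ (n + 2 - 1) * (1 - τ) ^ (n + 2 + 3))))) + _ = C
  have e1 : n + 2 - 1 = n + 1 := rfl
  have e2 : n + 2 + 3 = n + 5 := rfl
  rw [e1, e2]
  obtain _ | m := n
  · norm_num
    field_simp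
    ring
  · simp only [Nat.succ_sub_one]
    push_cast
    field_simp
    ring

lemma iterWithin_eq {U : Set ℝ} (hU : IsOpen U) (h0 : ℝ → ℝ) (k : ℕ) :
    Set.EqOn (iteratedDerivWithin k h0 U) (iteratedDeriv k h0) U := fun _x hx => by
  rw [iteratedDerivWithin_eq_iteratedFDerivWithin, iteratedDeriv_eq_iteratedFDeriv,
    iteratedFDerivWithin_of_isOpen k hU hx]

lemma gcont {U : Set ℝ} (hU : IsOpen U) {h0 : ℝ → ℝ} (hc : ContDiffOn ℝ (⊤ : ℕ∞) h0 U) (k : ℕ) :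
    ContinuousOn (iteratedDeriv k h0) U :=
  (hc.continuousOn_iteratedDerivWithin (by exact_mod_cast le_top) hU.uniqueDiffOn).congr
    (fun x hx => (iterWithin_eq hU h0 k hx).symm)

lemma gderiv {U : Set ℝ} (hU : IsOpen U) {h0 : ℝ → ℝ} (hc : ContDiffOn ℝ (⊤ : ℕ∞) h0 U) (k : ℕ)
    {τ : ℝ} (hτ : τ ∈ U) :
    HasDerivAt (iteratedDeriv k h0) (iteratedDeriv (k + 1) h0 τ) τ := by
  have hd : DifferentiableOn ℝ (iteratedDerivWithin k h0 U) U :=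
    hc.differentiableOn_iteratedDerivWithin (by exact_mod_cast ENat.coe_lt_top k) hU.uniqueDiffOn
  have hda : DifferentiableAt ℝ (iteratedDeriv k h0) τ :=
    ((hd τ hτ).differentiableAt (hU.mem_nhds hτ)).congr_of_eventuallyEq
      (Filter.eventuallyEq_of_mem (hU.mem_nhds hτ) fun x hx => (iterWithin_eq hU h0 k hx).symm)
  rw [iteratedDeriv_succ]
  exact hda.hasDerivAt

lemma eqZeroAtOne {F : ℝ → ℝ} (hF : ContinuousWithinAt F (Set.Ioo (-1:ℝ) 1) 1)
    (h : ∀ τ ∈ Set.Ioo (-1:ℝ) 1, F τ = 0) : F 1 = 0 := by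
  have hne : (nhdsWithin (1:ℝ) (Set.Ioo (-1:ℝ) 1)).NeBot := by
    rw [← mem_closure_iff_nhdsWithin_neBot, closure_Ioo (by norm_num : (-1:ℝ) ≠ 1)]
    exact Set.right_mem_Icc.mpr (by norm_num)
  refine tendsto_nhds_unique hF.tendsto ?_
  refine Filter.Tendsto.congr' ?_ tendsto_const_nhds
  filter_upwards [self_mem_nhdsWithin] with τ hτ
  exact (h τ hτ).symm

/-- Let `p ≥ 2` and `A₀, A₄ ∈ ℝ`. Define on `(−1,1)`:
`a₀(τ) = (1−τ)^(p+2)(1+τ)^(p−2) (A₀ + ((p+1)(p+2)/(4p)) (A₀ − A₄) I₊(τ))` and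
`a₄(τ) = (1+τ)^(p+2)(1−τ)^(p−2) (A₄ + ((p+1)(p+2)/(4p)) (A₄ − A₀) I₋(τ))`.
Then `a₀` and `a₄` both extend to `C^∞` functions on an open interval containing `[−1,1]`
if and only if `A₀ = A₄` (the regularity condition). -/
theorem stmt_8 (p : ℕ) (hp : 2 ≤ p) (A0 A4 : ℝ) :
    (∃ ε > (0 : ℝ), ∃ h0 h4 : ℝ → ℝ,
        ContDiffOn ℝ (⊤ : ℕ∞) h0 (Set.Ioo (-1 - ε) (1 + ε)) ∧
        ContDiffOn ℝ (⊤ : ℕ∞) h4 (Set.Ioo (-1 - ε) (1 + ε)) ∧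
        ∀ τ ∈ Set.Ioo (-1 : ℝ) 1,
          h0 τ = (1 - τ) ^ (p + 2) * (1 + τ) ^ (p - 2) *
              (A0 + ((p : ℝ) + 1) * ((p : ℝ) + 2) / (4 * (p : ℝ)) * (A0 - A4) * Iplus p τ) ∧
          h4 τ = (1 + τ) ^ (p + 2) * (1 - τ) ^ (p - 2) *
              (A4 + ((p : ℝ) + 1) * ((p : ℝ) + 2) / (4 * (p : ℝ)) * (A4 - A0) * Iminus p τ))
      ↔ A0 = A4 := by
  constructor
  · rintro ⟨ε, hε, h0, h4, hc0, hc4, heq⟩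
    obtain ⟨n, rfl⟩ : ∃ n, p = n + 2 := ⟨p - 2, by omega⟩
    have hUopen : IsOpen (Set.Ioo (-1 - ε) (1 + ε)) := isOpen_Ioo
    have hU1 : (1:ℝ) ∈ Set.Ioo (-1 - ε) (1 + ε) := ⟨by linarith, by linarith⟩
    have hIU : Set.Ioo (-1:ℝ) 1 ⊆ Set.Ioo (-1 - ε) (1 + ε) :=
      Set.Ioo_subset_Ioo (by linarith) (by linarith)

    set C : ℝ := (((n + 2 : ℕ) : ℝ) + 1) * (((n + 2 : ℕ) : ℝ) + 2) / (4 * ((n + 2 : ℕ) : ℝ)) * (A0 - A4) with hCdef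
    have heq' : ∀ t ∈ Set.Ioo (-1:ℝ) 1,
        h0 t = (1 - t) ^ (n + 4) * (1 + t) ^ n * (A0 + C * Iplus (n + 2) t) :=
      fun t ht => (heq t ht).1
    -- the first order identity on (-1,1)
    have hbase : ∀ τ ∈ Set.Ioo (-1:ℝ) 1,
        (1 - τ ^ 2) * iteratedDeriv 1 h0 τ + (4 + 2 * ((n : ℝ) + 2) * τ) * h0 τ = C := by
      intro τ hτ
      obtain ⟨D, hD, hid⟩ := key_identity n A0 C hτ
      have hh : HasDerivAt h0 D τ := by
        refine hD.congr_of_eventuallyEq ?_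
        filter_upwards [isOpen_Ioo.mem_nhds hτ] with t ht using heq' t ht
      rw [iteratedDeriv_one, hh.deriv, heq' τ hτ]
      exact hid
    have hca : ∀ k : ℕ, ContinuousAt (iteratedDeriv k h0) 1 :=
      fun k => (gcont hUopen hc0 k).continuousAt (hUopen.mem_nhds hU1)
    have hq : ∀ τ : ℝ, HasDerivAt (fun t : ℝ => 1 - t ^ 2) (-(2 * τ)) τ := by
      intro τ
      simpa using (hasDerivAt_pow 2 τ).const_sub 1
    have hlin : ∀ a τ : ℝ, HasDerivAt (fun t : ℝ => 4 + a * t) a τ := by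
      intro a τ
      simpa using ((hasDerivAt_id τ).const_mul a).const_add 4
    -- the differentiated identities on (-1,1)
    have hP : ∀ k : ℕ, ∀ τ ∈ Set.Ioo (-1:ℝ) 1,
        (1 - τ ^ 2) * iteratedDeriv (k + 2) h0 τ
          + (4 + (2 * ((n : ℝ) + 2) - 2 * (k : ℝ) - 2) * τ) * iteratedDeriv (k + 1) h0 τ
          + ((k : ℝ) + 1) * (2 * ((n : ℝ) + 2) - (k : ℝ)) * iteratedDeriv k h0 τ = 0 := by
      intro k
      induction k with
      | zero =>
        intro τ hτ
        have hg1 := gderiv hUopen hc0 1 (hIU hτ)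
        have hg0 := gderiv hUopen hc0 0 (hIU hτ)
        have hE : HasDerivAt (fun t => (1 - t ^ 2) * iteratedDeriv 1 h0 t
              + (4 + 2 * ((n : ℝ) + 2) * t) * iteratedDeriv 0 h0 t)
            ((-(2 * τ)) * iteratedDeriv 1 h0 τ + (1 - τ ^ 2) * iteratedDeriv 2 h0 τ
              + (2 * ((n : ℝ) + 2) * iteratedDeriv 0 h0 τ
                + (4 + 2 * ((n : ℝ) + 2) * τ) * iteratedDeriv 1 h0 τ)) τ :=
          ((hq τ).mul hg1).add ((hlin _ τ).mul hg0)
        have hF0 : HasDerivAt (fun t => (1 - t ^ 2) * iteratedDeriv 1 h0 t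
              + (4 + 2 * ((n : ℝ) + 2) * t) * iteratedDeriv 0 h0 t) 0 τ := by
          refine (hasDerivAt_const τ C).congr_of_eventuallyEq ?_
          filter_upwards [isOpen_Ioo.mem_nhds hτ] with t ht
          rw [iteratedDeriv_zero]
          exact hbase t ht
        have hu : (-(2 * τ)) * iteratedDeriv 1 h0 τ + (1 - τ ^ 2) * iteratedDeriv 2 h0 τ
              + (2 * ((n : ℝ) + 2) * iteratedDeriv 0 h0 τ
                + (4 + 2 * ((n : ℝ) + 2) * τ) * iteratedDeriv 1 h0 τ) = 0 := hE.unique hF0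
        push_cast
        linear_combination hu
      | succ k ih =>
        intro τ hτ
        have hg2 := gderiv hUopen hc0 (k + 2) (hIU hτ)
        have hg1 := gderiv hUopen hc0 (k + 1) (hIU hτ)
        have hg0 := gderiv hUopen hc0 k (hIU hτ)
        have hE : HasDerivAt (fun t => (1 - t ^ 2) * iteratedDeriv (k + 2) h0 t
              + (4 + (2 * ((n : ℝ) + 2) - 2 * (k : ℝ) - 2) * t) * iteratedDeriv (k + 1) h0 t
              + ((k : ℝ) + 1) * (2 * ((n : ℝ) + 2) - (k : ℝ)) * iteratedDeriv k h0 t)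
            ((-(2 * τ)) * iteratedDeriv (k + 2) h0 τ + (1 - τ ^ 2) * iteratedDeriv (k + 3) h0 τ
              + ((2 * ((n : ℝ) + 2) - 2 * (k : ℝ) - 2) * iteratedDeriv (k + 1) h0 τ
                + (4 + (2 * ((n : ℝ) + 2) - 2 * (k : ℝ) - 2) * τ) * iteratedDeriv (k + 2) h0 τ)
              + ((k : ℝ) + 1) * (2 * ((n : ℝ) + 2) - (k : ℝ)) * iteratedDeriv (k + 1) h0 τ) τ :=
          (((hq τ).mul hg2).add ((hlin _ τ).mul hg1)).add (hg0.const_mul _)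
        have hF0 : HasDerivAt (fun t => (1 - t ^ 2) * iteratedDeriv (k + 2) h0 t
              + (4 + (2 * ((n : ℝ) + 2) - 2 * (k : ℝ) - 2) * t) * iteratedDeriv (k + 1) h0 t
              + ((k : ℝ) + 1) * (2 * ((n : ℝ) + 2) - (k : ℝ)) * iteratedDeriv k h0 t) 0 τ := by
          refine (hasDerivAt_const τ 0).congr_of_eventuallyEq ?_
          filter_upwards [isOpen_Ioo.mem_nhds hτ] with t ht
          exact ih t ht
        have hu := hE.unique hF0
        push_cast
        push_cast at hu
        linear_combination hu
    -- boundary relations at τ = 1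
    have hbc : ∀ k : ℕ, (2 * ((n : ℝ) + 2) - 2 * (k : ℝ) + 2) * iteratedDeriv (k + 1) h0 1
        + ((k : ℝ) + 1) * (2 * ((n : ℝ) + 2) - (k : ℝ)) * iteratedDeriv k h0 1 = 0 := by
      intro k
      have hcw : ContinuousWithinAt (fun τ => (1 - τ ^ 2) * iteratedDeriv (k + 2) h0 τ
          + (4 + (2 * ((n : ℝ) + 2) - 2 * (k : ℝ) - 2) * τ) * iteratedDeriv (k + 1) h0 τ
          + ((k : ℝ) + 1) * (2 * ((n : ℝ) + 2) - (k : ℝ)) * iteratedDeriv k h0 τ)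
          (Set.Ioo (-1:ℝ) 1) 1 := by
        apply ContinuousAt.continuousWithinAt
        exact (((by fun_prop : ContinuousAt (fun τ : ℝ => 1 - τ ^ 2) 1).mul (hca (k + 2))).add
          ((by fun_prop : ContinuousAt
              (fun τ : ℝ => 4 + (2 * ((n : ℝ) + 2) - 2 * (k : ℝ) - 2) * τ) 1).mul
            (hca (k + 1)))).add ((hca k).const_mul _)
      have h1 := eqZeroAtOne hcw (hP k)
      simp only [one_pow] at h1
      linear_combination h1
    have hbc0 : (4 + 2 * ((n : ℝ) + 2)) * h0 1 = C := by
      have hcw : ContinuousWithinAt (fun τ => (1 - τ ^ 2) * iteratedDeriv 1 h0 τ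
          + (4 + 2 * ((n : ℝ) + 2) * τ) * h0 τ - C) (Set.Ioo (-1:ℝ) 1) 1 := by
        apply ContinuousAt.continuousWithinAt
        have hh0 : ContinuousAt h0 1 := by
          have := hca 0
          rwa [iteratedDeriv_zero] at this
        exact ((((by fun_prop : ContinuousAt (fun τ : ℝ => 1 - τ ^ 2) 1).mul (hca 1)).add
          ((by fun_prop : ContinuousAt (fun τ : ℝ => 4 + 2 * ((n : ℝ) + 2) * τ) 1).mul
            hh0)).sub continuousAt_const)
      have h1 := eqZeroAtOne hcw (by intro τ hτ; simp only [sub_eq_zero]; exact hbase τ hτ)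
      simp only [one_pow] at h1
      linear_combination h1
    -- the top derivative vanishes
    have htop : iteratedDeriv (n + 3) h0 1 = 0 := by
      have h := hbc (n + 3)
      have h2 : ((n : ℝ) + 4) * ((n : ℝ) + 1) * iteratedDeriv (n + 3) h0 1 = 0 := by
        push_cast at h
        linear_combination h
      have hcoef : ((n : ℝ) + 4) * ((n : ℝ) + 1) ≠ 0 := by positivity
      exact (mul_eq_zero.mp h2).resolve_left hcoef
    -- descending induction
    have hdesc : ∀ j : ℕ, j ≤ n + 3 → iteratedDeriv (n + 3 - j) h0 1 = 0 := by
      intro j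
      induction j with
      | zero => intro _; simpa using htop
      | succ j ihj =>
        intro hj
        have hIH := ihj (by omega)
        have hk1 : (n + 3 - (j + 1)) + 1 = n + 3 - j := by omega
        have hrel := hbc (n + 3 - (j + 1))
        rw [hk1, hIH, mul_zero, zero_add] at hrel
        have hkle : ((n + 3 - (j + 1) : ℕ) : ℝ) ≤ (n : ℝ) + 2 := by
          have : n + 3 - (j + 1) ≤ n + 2 := by omega
          exact_mod_cast this
        have hkpos : (0:ℝ) ≤ ((n + 3 - (j + 1) : ℕ) : ℝ) := Nat.cast_nonneg _
        have hne : (((n + 3 - (j + 1) : ℕ) : ℝ) + 1)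
            * (2 * ((n : ℝ) + 2) - ((n + 3 - (j + 1) : ℕ) : ℝ)) ≠ 0 := by
          have : (0:ℝ) < (((n + 3 - (j + 1) : ℕ) : ℝ) + 1)
              * (2 * ((n : ℝ) + 2) - ((n + 3 - (j + 1) : ℕ) : ℝ)) := by nlinarith
          exact ne_of_gt this
        exact (mul_eq_zero.mp hrel).resolve_left hne
    have he0 : h0 1 = 0 := by
      have := hdesc (n + 3) le_rfl
      simpa using this
    rw [he0, mul_zero] at hbc0
    have hcpos : (0:ℝ) < (((n + 2 : ℕ) : ℝ) + 1) * (((n + 2 : ℕ) : ℝ) + 2) / (4 * ((n + 2 : ℕ) : ℝ)) := by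
      have : (0:ℝ) < ((n + 2 : ℕ) : ℝ) := by positivity
      positivity
    have : A0 - A4 = 0 := by
      rcases mul_eq_zero.mp hbc0.symm with h | h
      · exact absurd h (ne_of_gt hcpos)
      · exact h
    linarith
  · rintro rfl
    refine ⟨1, one_pos, fun τ => (1 - τ) ^ (p + 2) * (1 + τ) ^ (p - 2) * A0,
      fun τ => (1 + τ) ^ (p + 2) * (1 - τ) ^ (p - 2) * A0, ?_, ?_, ?_⟩
    · exact (((contDiff_const.sub contDiff_id).pow _).mul
        ((contDiff_const.add contDiff_id).pow _)|>.mul contDiff_const).contDiffOn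
    · exact (((contDiff_const.add contDiff_id).pow _).mul
        ((contDiff_const.sub contDiff_id).pow _)|>.mul contDiff_const).contDiffOn
    · intro τ hτ
      constructor <;> · simp
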